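/- For every integer k ≥ 2, every forcing set S of the diamond-necklace N_k contains, for each i with 1 ≤ i ≤ k, at least one of the two vertices c_i and d_i of the diamond D_i. -/
import Mathlib


/-- A set `T` of (colored) vertices is closed under the forcing rule: whenever a colored
vertex `v ∈ T` has the property that all of its neighbors outside `T` are equal to `w`
(i.e. `w` is its unique non-colored neighbor, if `w ∉ T`), then `w ∈ T`. -/
def ForcingClosed {V : Type*} (G : SimpleGraph V) (T : Set V) : Prop :=
  ∀ v ∈ T, ∀ w, G.Adj v w → (∀ u, G.Adj v u → u ∉ T → u = w) → w ∈ T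

/-- `S` is a (zero) forcing set of `G`: iterating the forcing process starting from `S`
colors all vertices; equivalently, every forcing-closed superset of `S` is everything. -/
def IsForcingSet {V : Type*} (G : SimpleGraph V) (S : Set V) : Prop :=
  ∀ T : Set V, S ⊆ T → ForcingClosed G T → ∀ v, v ∈ T

/-- `S` is a total forcing set of `G`: a forcing set whose induced subgraph has no
isolated vertex. -/
def IsTotalForcingSet {V : Type*} (G : SimpleGraph V) (S : Set V) : Prop :=
  IsForcingSet G S ∧ ∀ v ∈ S, ∃ w ∈ S, G.Adj v w

/-- The forcing number `F(G)`: minimum cardinality of a forcing set. -/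
noncomputable def forcingNumber {V : Type*} (G : SimpleGraph V) : ℕ :=
  sInf {n : ℕ | ∃ S : Set V, IsForcingSet G S ∧ S.ncard = n}

/-- The total forcing number `F_t(G)`: minimum cardinality of a total forcing set. -/
noncomputable def totalForcingNumber {V : Type*} (G : SimpleGraph V) : ℕ :=
  sInf {n : ℕ | ∃ S : Set V, IsTotalForcingSet G S ∧ S.ncard = n}

/-- The diamond-necklace `N_k`.  Its vertices are pairs `(i, j)` with `i : Fin k`
indexing the diamond and `j : Fin 4` the position inside diamond `D_i`, where
`j = 0, 1, 2, 3` correspond to the vertices `a_i, b_i, c_i, d_i` respectively and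
`a_i b_i` is the missing edge of the diamond.  Two vertices in the same diamond are
adjacent unless they are `a_i` and `b_i`, and in addition `a_i` is joined to `b_{i+1}`
(indices modulo `k`). -/
def diamondNecklace (k : ℕ) : SimpleGraph (Fin k × Fin 4) :=
  SimpleGraph.fromRel (fun p q =>
    (p.1 = q.1 ∧ ¬ ((p.2 = 0 ∧ q.2 = 1) ∨ (p.2 = 1 ∧ q.2 = 0))) ∨
    ((q.1 : ℕ) = ((p.1 : ℕ) + 1) % k ∧ p.2 = 0 ∧ q.2 = 1))

lemma diamondNecklace_adj_cd (k : ℕ) (v1 : Fin k) (v2 w2 : Fin 4)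
    (h1 : v2 ≠ 2 ∧ v2 ≠ 3) (h2 : w2 = 2 ∨ w2 = 3) :
    (diamondNecklace k).Adj (v1, v2) (v1, w2) := by
  simp only [diamondNecklace, SimpleGraph.fromRel_adj]
  fin_cases v2 <;> fin_cases w2 <;> simp_all [Prod.ext_iff]

/-- For every `k ≥ 2`, every forcing set `S` of `N_k` contains, for each `i`, at least
one of the vertices `c_i` and `d_i` (the vertices labelled `2` and `3` of diamond
`D_i`). -/
theorem forcingSet_diamondNecklace_contains_c_or_d (k : ℕ) (hk : 2 ≤ k)
    (S : Set (Fin k × Fin 4)) (hS : IsForcingSet (diamondNecklace k) S) :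
    ∀ i : Fin k, (i, (2 : Fin 4)) ∈ S ∨ (i, (3 : Fin 4)) ∈ S := by
  intro i
  by_contra h
  push_neg at h
  obtain ⟨h2, h3⟩ := h
  have hclosed : ForcingClosed (diamondNecklace k)
      {p | p ≠ (i, 2) ∧ p ≠ (i, 3)} := by
    intro v hv w hadj huniq
    by_contra hw
    have hw' : w = (i, (2 : Fin 4)) ∨ w = (i, (3 : Fin 4)) := by
      by_contra hc
      push_neg at hc
      exact hw ⟨hc.1, hc.2⟩
    obtain ⟨v1, v2⟩ := v
    simp only [diamondNecklace, SimpleGraph.fromRel_adj] at hadj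
    obtain ⟨hne, hrel⟩ := hadj
    rcases hw' with rfl | rfl
    · have hv1 : v1 = i := by
        rcases hrel with (⟨h', _⟩ | ⟨_, _, h'⟩) | (⟨h', _⟩ | ⟨_, h', _⟩)
        · exact h'
        · simp at h'
        · exact h'.symm
        · simp at h'
      subst hv1
      have hv2' : v2 ≠ 2 ∧ v2 ≠ 3 := by
        refine ⟨fun h' => hv.1 ?_, fun h' => hv.2 ?_⟩ <;> rw [h']
      have := huniq (v1, 3) (diamondNecklace_adj_cd k v1 v2 3 hv2' (Or.inr rfl))
        (fun hmem => hmem.2 rfl)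
      exact (by decide : (3 : Fin 4) ≠ 2) (congrArg Prod.snd this)
    · have hv1 : v1 = i := by
        rcases hrel with (⟨h', _⟩ | ⟨_, _, h'⟩) | (⟨h', _⟩ | ⟨_, h', _⟩)
        · exact h'
        · simp at h'
        · exact h'.symm
        · simp at h'
      subst hv1
      have hv2' : v2 ≠ 2 ∧ v2 ≠ 3 := by
        refine ⟨fun h' => hv.1 ?_, fun h' => hv.2 ?_⟩ <;> rw [h']
      have := huniq (v1, 2) (diamondNecklace_adj_cd k v1 v2 2 hv2' (Or.inl rfl))
        (fun hmem => hmem.1 rfl)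
      exact (by decide : (2 : Fin 4) ≠ 3) (congrArg Prod.snd this)
  have hsub : S ⊆ {p | p ≠ (i, 2) ∧ p ≠ (i, 3)} := by
    intro p hp
    exact ⟨fun h' => h2 (h' ▸ hp), fun h' => h3 (h' ▸ hp)⟩
  exact (hS _ hsub hclosed (i, 2)).1 rfl
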